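/- arXiv:2505.19682 — 2 statements merged into one kernel-verified Lean document; each statement's English description precedes it below -/
import Mathlib

section
/- (Split-kl inequality.) Let a < μ < b be real numbers, let Z_1, …, Z_N be i.i.d. random variables taking values in [a, b], and set Z_n^+ := max{0, Z_n − μ} and Z_n^- := max{0, μ − Z_n}, so that Z_n = μ + Z_n^+ − Z_n^-. Let p = E[Z_1], p^+ = E[Z_1^+], p^- = E[Z_1^-], and let p̂^+ = (1/N)·Σ_{n=1}^N Z_n^+ and p̂^- = (1/N)·Σ_{n=1}^N Z_n^- be the empirical means. Then for any δ ∈ (0,1), with probability at least 1 − δ, p ≤ μ + (b − μ)·kl^{-1,+}(p̂^+/(b − μ), ln(2/δ)/N) − (μ − a)·kl^{-1,−}(p̂^- /(μ − a), ln(2/δ)/N). -/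
open MeasureTheory ProbabilityTheory

/-- The binary Kullback–Leibler divergence `kl(p‖q)`, with the conventions
`0 · ln 0 = 0` and `kl(p‖q) = +∞` whenever `q ∈ {0,1}` and `p ≠ q`. -/
noncomputable def klBin (p q : ℝ) : EReal :=
  if (q = 0 ∧ p ≠ 0) ∨ (q = 1 ∧ p ≠ 1) then ⊤
  else ((p * Real.log (p / q) + (1 - p) * Real.log ((1 - p) / (1 - q)) : ℝ) : EReal)

/-- The upper inverse `kl⁻¹⁺(p̂, ε) = max {p ∈ [0,1] : kl(p̂‖p) ≤ ε}`. -/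
noncomputable def klInvUp (phat : ℝ) (ε : EReal) : ℝ :=
  sSup {p : ℝ | p ∈ Set.Icc (0 : ℝ) 1 ∧ klBin phat p ≤ ε}

/-- The lower inverse `kl⁻¹⁻(p̂, ε) = min {p ∈ [0,1] : kl(p̂‖p) ≤ ε}`. -/
noncomputable def klInvLow (phat : ℝ) (ε : EReal) : ℝ :=
  sInf {p : ℝ | p ∈ Set.Icc (0 : ℝ) 1 ∧ klBin phat p ≤ ε}

/-!
Write `Z = μ₀ + Z⁺ - Z⁻`. The normalised parts `Z⁺ / (b - μ₀)` and `Z⁻ / (μ₀ - a)` are i.i.d.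
with values in `[0, 1]`, so the kl-inequality bounds the mean of the first from above and,
through the symmetry `kl(1 - p‖1 - q) = kl(p‖q)`, the mean of the second from below, each
failing with probability at most `exp (-N ε) = δ / 2`; a union bound combines the two.

The kl-inequality itself: if `q > kl⁻¹⁺(p̂, ε)` then `p̂ < q` and `kl(p̂‖q) > ε`, and since
`kl(·‖q)` decreases on `[0, q]` the empirical mean lies below the point `t < q` with
`kl(t‖q) = ε`. Chernoff's bound at the optimal exponent gives `P(p̂ ≤ t) ≤ exp (-N kl(t‖q))`.
-/

noncomputable def klReal (p q : ℝ) : ℝ :=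
  p * Real.log p - p * Real.log q + ((1 - p) * Real.log (1 - p) - (1 - p) * Real.log (1 - q))

lemma klBin_self (p : ℝ) : klBin p p = 0 := by
  by_cases hp : p = 0 <;> by_cases hp' : 1 - p = 0 <;> simp [klBin, *]

lemma klBin_eq_klReal (p : ℝ) {q : ℝ} (hq0 : 0 < q) (hq1 : q < 1) :
    klBin p q = klReal p q := by
  have h1q : 1 - q ≠ 0 := by linarith
  rw [klBin, if_neg (by grind), klReal]
  by_cases hp : p = 0 <;> by_cases hp' : 1 - p = 0 <;>
    simp [Real.log_div, hq0.ne', mul_sub, *]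

lemma klBin_one_sub_one_sub (p q : ℝ) : klBin (1 - p) (1 - q) = klBin p q := by
  unfold klBin
  simp only [sub_sub_cancel]
  congr 1
  · grind
  · ring_nf

lemma klInvLow_eq_one_sub_klInvUp {phat : ℝ} {ε : EReal} (hp : phat ∈ Set.Icc (0 : ℝ) 1)
    (hε : 0 ≤ ε) : klInvLow phat ε = 1 - klInvUp (1 - phat) ε := by
  set S := {p : ℝ | p ∈ Set.Icc (0 : ℝ) 1 ∧ klBin (1 - phat) p ≤ ε}
  set T := {p : ℝ | p ∈ Set.Icc (0 : ℝ) 1 ∧ klBin phat p ≤ ε}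
  have hmem (p : ℝ) : p ∈ T ↔ 1 - p ∈ S := by
    simp only [S, T, Set.mem_ofPred_eq, Set.mem_Icc, klBin_one_sub_one_sub]
    constructor <;> rintro ⟨⟨h0, h1⟩, h⟩ <;> exact ⟨⟨by linarith, by linarith⟩, h⟩
  have hT : phat ∈ T := ⟨hp, by rw [klBin_self]; exact hε⟩
  have hS : 1 - phat ∈ S := (hmem phat).1 hT
  have hTbdd : BddBelow T := ⟨0, fun p hp ↦ hp.1.1⟩
  have hSbdd : BddAbove S := ⟨1, fun p hp ↦ hp.1.2⟩
  apply le_antisymm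
  · have : sSup S ≤ 1 - sInf T := csSup_le ⟨_, hS⟩ fun s hs ↦ by
      have := csInf_le hTbdd ((hmem (1 - s)).2 (by rwa [sub_sub_cancel]))
      linarith
    change sInf T ≤ 1 - sSup S
    linarith
  · change 1 - sSup S ≤ sInf T
    exact le_csInf ⟨_, hT⟩ fun p hp ↦ by linarith [le_csSup hSbdd ((hmem p).1 hp)]

lemma klReal_self (q : ℝ) : klReal q q = 0 := by
  rw [klReal]; ring

lemma continuous_klReal (q : ℝ) : Continuous fun p ↦ klReal p q := by
  unfold klReal
  fun_prop

lemma hasDerivAt_klReal {p : ℝ} (q : ℝ) (hp0 : 0 < p) (hp1 : p < 1) :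
    HasDerivAt (fun p ↦ klReal p q)
      (Real.log p - Real.log q - (Real.log (1 - p) - Real.log (1 - q))) p := by
  have h1 := Real.hasDerivAt_mul_log hp0.ne'
  have h2 := (Real.hasDerivAt_mul_log (sub_ne_zero.2 hp1.ne')).comp p
    ((hasDerivAt_id p).const_sub 1)
  exact ((h1.sub ((hasDerivAt_id p).mul_const (Real.log q))).add
    (h2.sub (((hasDerivAt_id p).const_sub 1).mul_const (Real.log (1 - q))))).congr_deriv (by ring)

lemma antitoneOn_klReal {q : ℝ} (hq1 : q < 1) :
    AntitoneOn (fun p ↦ klReal p q) (Set.Icc 0 q) := by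
  apply antitoneOn_of_deriv_nonpos (convex_Icc 0 q) (continuous_klReal q).continuousOn
  all_goals rw [interior_Icc]; intro p ⟨hp0, hpq⟩
  · exact (hasDerivAt_klReal q hp0 (hpq.trans hq1)).differentiableAt.differentiableWithinAt
  · rw [(hasDerivAt_klReal q hp0 (hpq.trans hq1)).deriv]
    have := Real.log_le_log hp0 hpq.le
    have := Real.log_le_log (by linarith) (by linarith : 1 - q ≤ 1 - p)
    linarith

-- Chernoff's bound for a `[0, 1]`-valued variable of mean `q` at the optimal exponent
-- `λ = log (t (1 - q) / (q (1 - t)))`.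
lemma exp_neg_klReal_eq {t q : ℝ} (ht0 : 0 < t) (ht1 : t < 1) (hq0 : 0 < q) (hq1 : q < 1) :
    Real.exp (-klReal t q) =
      Real.exp (-(Real.log (t * (1 - q) / (q * (1 - t))) * t)) *
        (1 - q + q * Real.exp (Real.log (t * (1 - q) / (q * (1 - t))))) := by
  have h1q : 0 < 1 - q := by linarith
  have h1t : 0 < 1 - t := by linarith
  have hmgf : 1 - q + q * (t * (1 - q) / (q * (1 - t))) =
      Real.exp (Real.log ((1 - q) / (1 - t))) := by
    rw [Real.exp_log (by positivity)]
    field_simp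
    ring
  rw [Real.exp_log (by positivity), hmgf, ← Real.exp_add, klReal]
  congr 1
  rw [Real.log_div (by positivity) (by positivity), Real.log_mul (by positivity) (by positivity),
    Real.log_mul (by positivity) (by positivity), Real.log_div (by positivity) (by positivity)]
  ring

lemma le_klInvUp_of_le {s q : ℝ} {ε : EReal} (hs : s ∈ Set.Icc (0 : ℝ) 1) (hε : 0 ≤ ε)
    (hqs : q ≤ s) : q ≤ klInvUp s ε :=
  hqs.trans (le_csSup ⟨1, fun _ hp ↦ hp.1.2⟩ ⟨hs, by rwa [klBin_self]⟩)

lemma le_klInvUp_of_klBin_le {s q : ℝ} {ε : EReal} (hq : q ∈ Set.Icc (0 : ℝ) 1)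
    (h : klBin s q ≤ ε) : q ≤ klInvUp s ε :=
  le_csSup ⟨1, fun _ hp ↦ hp.1.2⟩ ⟨hq, h⟩

lemma le_klInvUp_of_klReal_le {s t q ε : ℝ} (hq0 : 0 < q) (hq1 : q < 1)
    (ht : t ∈ Set.Icc 0 q) (hkl : klReal t q ≤ ε) (hs : s ∈ Set.Icc (0 : ℝ) 1)
    (hts : t ≤ s) :
    q ≤ klInvUp s ε := by
  rcases le_total q s with hqs | hsq
  · have hε : klReal q q ≤ ε :=
      (antitoneOn_klReal hq1 ht ⟨ht.1.trans ht.2, le_rfl⟩ ht.2).trans hkl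
    rw [klReal_self] at hε
    exact le_klInvUp_of_le hs (EReal.coe_nonneg.2 hε) hqs
  · refine le_klInvUp_of_klBin_le ⟨hq0.le, hq1.le⟩ ?_
    rw [klBin_eq_klReal s hq0 hq1]
    exact EReal.coe_le_coe_iff.2 ((antitoneOn_klReal hq1 ht ⟨hs.1, hsq⟩ hts).trans hkl)

lemma inv_card_mul_sum_mem_Icc {ι : Type*} [Fintype ι] {x : ι → ℝ}
    (hx : ∀ i, x i ∈ Set.Icc (0 : ℝ) 1) :
    (Fintype.card ι : ℝ)⁻¹ * ∑ i, x i ∈ Set.Icc (0 : ℝ) 1 := by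
  refine ⟨mul_nonneg (by positivity) (Finset.sum_nonneg fun i _ ↦ (hx i).1), ?_⟩
  rcases isEmpty_or_nonempty ι with hι | hι
  · simp
  rw [inv_mul_le_iff₀ (by positivity), mul_one]
  simpa using Finset.sum_le_sum fun i (_ : i ∈ Finset.univ) ↦ (hx i).2

lemma max_zero_div_mem_Icc {y c : ℝ} (hc : 0 < c) (hy : y ≤ c) :
    max 0 y / c ∈ Set.Icc (0 : ℝ) 1 :=
  ⟨div_nonneg (le_max_left _ _) hc.le, (div_le_one hc).2 (max_le hc.le hy)⟩

section Probability

variable {Ω ι : Type*} [MeasurableSpace Ω] {P : Measure Ω} [IsProbabilityMeasure P]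

lemma mgf_le_of_mem_Icc_zero_one {X : Ω → ℝ} (hX : AEMeasurable X P)
    (hrange : ∀ ω, X ω ∈ Set.Icc (0 : ℝ) 1) (l : ℝ) :
    mgf X P l ≤ 1 - P[X] + P[X] * Real.exp l := by
  have hXint : Integrable X P := .of_mem_Icc 0 1 hX (ae_of_all _ hrange)
  have h1X : Integrable (fun ω ↦ 1 - X ω) P := (integrable_const 1).sub hXint
  calc mgf X P l ≤ ∫ ω, (1 - X ω + X ω * Real.exp l) ∂P := by
        refine integral_mono (integrable_exp_mul_of_mem_Icc hX (ae_of_all _ hrange))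
          (h1X.add (hXint.mul_const _)) fun ω ↦ ?_
        obtain ⟨h0, h1⟩ := hrange ω
        simpa [mul_comm] using convexOn_exp.2 (Set.mem_univ 0) (Set.mem_univ l)
          (sub_nonneg.2 h1) h0 (by ring)
    _ = 1 - P[X] + P[X] * Real.exp l := by
        rw [integral_add h1X (hXint.mul_const _),
          integral_sub (integrable_const 1) hXint, integral_mul_const]
        simp

lemma ofReal_one_sub_le_measure_of_compl_inter_subset {s t u : Set Ω} {x y : ℝ} (hx : 0 ≤ x)
    (hy : 0 ≤ y) (hs : P s ≤ ENNReal.ofReal x) (ht : P t ≤ ENNReal.ofReal y)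
    (hstu : sᶜ ∩ tᶜ ⊆ u) : ENNReal.ofReal (1 - (x + y)) ≤ P u := by
  have hcompl : uᶜ ⊆ s ∪ t := Set.compl_subset_comm.1 (Set.compl_union s t ▸ hstu)
  rw [ENNReal.ofReal_sub _ (add_nonneg hx hy), ENNReal.ofReal_one, tsub_le_iff_right]
  calc 1 = P (u ∪ uᶜ) := by rw [Set.union_compl_self, measure_univ]
    _ ≤ P u + P uᶜ := measure_union_le _ _
    _ ≤ P u + (P s + P t) := by
      gcongr
      exact (measure_mono hcompl).trans (measure_union_le _ _)
    _ ≤ P u + ENNReal.ofReal (x + y) := by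
      rw [ENNReal.ofReal_add hx hy]
      gcongr

lemma integral_eq_add_integral_max_sub_integral_max {W : Ω → ℝ} (hW : Integrable W P)
    (c : ℝ) :
    P[W] = c + ∫ ω, max 0 (W ω - c) ∂P - ∫ ω, max 0 (c - W ω) ∂P := by
  have hpos : Integrable (fun ω ↦ max 0 (W ω - c)) P :=
    (integrable_const 0).sup (hW.sub (integrable_const c))
  have hneg : Integrable (fun ω ↦ max 0 (c - W ω)) P :=
    (integrable_const 0).sup ((integrable_const c).sub hW)
  have hsplit : ∫ ω, (max 0 (W ω - c) - max 0 (c - W ω)) ∂P = ∫ ω, (W ω - c) ∂P := by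
    congr 1 with ω
    rcases le_total (W ω) c with h | h <;> simp [h]
  rw [add_sub_assoc, ← integral_sub hpos hneg, hsplit, integral_sub hW (integrable_const c)]
  simp

variable [Fintype ι] {X : ι → Ω → ℝ}

lemma measure_sum_le_le_exp_neg_klReal (hmeas : ∀ i, Measurable (X i))
    (hrange : ∀ i ω, X i ω ∈ Set.Icc (0 : ℝ) 1)
    (hindep : iIndepFun X P) {q t : ℝ} (hmean : ∀ i, P[X i] = q)
    (ht0 : 0 < t) (htq : t < q) (hq1 : q < 1) :
    P {ω | ∑ i, X i ω ≤ Fintype.card ι * t} ≤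
      ENNReal.ofReal (Real.exp (-(Fintype.card ι * klReal t q))) := by
  set l := Real.log (t * (1 - q) / (q * (1 - t)))
  have hl : l ≤ 0 := by
    have : q * (1 - t) > 0 := by nlinarith
    refine Real.log_nonpos (by positivity) ?_
    rw [div_le_one this]
    nlinarith
  have hint : Integrable (fun ω ↦ Real.exp (l * (∑ i, X i) ω)) P :=
    hindep.integrable_exp_mul_sum hmeas fun i _ ↦
      integrable_exp_mul_of_mem_Icc (hmeas i).aemeasurable (ae_of_all _ (hrange i))
  have hmgf : mgf (∑ i, X i) P l ≤ (1 - q + q * Real.exp l) ^ Fintype.card ι := by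
    rw [hindep.mgf_sum hmeas, ← Finset.card_univ, ← Finset.prod_const]
    refine Finset.prod_le_prod (fun _ _ ↦ mgf_nonneg) fun i _ ↦ ?_
    simpa [hmean i] using
      mgf_le_of_mem_Icc_zero_one (P := P) (hmeas i).aemeasurable (hrange i) l
  rw [ENNReal.le_ofReal_iff_toReal_le (measure_ne_top _ _) (Real.exp_pos _).le]
  calc (P {ω | ∑ i, X i ω ≤ Fintype.card ι * t}).toReal
      ≤ Real.exp (-l * (Fintype.card ι * t)) * mgf (∑ i, X i) P l := by
        simpa [measureReal_def, Finset.sum_apply] using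
          measure_le_le_exp_mul_mgf (Fintype.card ι * t) hl hint
    _ ≤ Real.exp (-l * (Fintype.card ι * t)) * (1 - q + q * Real.exp l) ^ Fintype.card ι := by
        gcongr
    _ = (Real.exp (-(l * t)) * (1 - q + q * Real.exp l)) ^ Fintype.card ι := by
        rw [mul_pow, ← Real.exp_nat_mul]
        ring_nf
    _ = Real.exp (-(Fintype.card ι * klReal t q)) := by
        rw [← exp_neg_klReal_eq ht0 (htq.trans hq1) (ht0.trans htq) hq1, ← Real.exp_nat_mul]
        ring_nf

variable [Nonempty ι]

lemma measure_klInvUp_lt_le_of_mem_Ioo (hmeas : ∀ i, Measurable (X i))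
    (hrange : ∀ i ω, X i ω ∈ Set.Icc (0 : ℝ) 1) (hindep : iIndepFun X P) {q ε : ℝ}
    (hmean : ∀ i, P[X i] = q) (hq0 : 0 < q) (hq1 : q < 1) (hε : 0 < ε) :
    P {ω | klInvUp ((Fintype.card ι : ℝ)⁻¹ * ∑ i, X i ω) ε < q} ≤
      ENNReal.ofReal (Real.exp (-(Fintype.card ι * ε))) := by
  have havg ω := inv_card_mul_sum_mem_Icc fun i ↦ hrange i ω
  by_cases h0 : klReal 0 q ≤ ε
  · have hempty : {ω | klInvUp ((Fintype.card ι : ℝ)⁻¹ * ∑ i, X i ω) ε < q} = ∅ :=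
      Set.eq_empty_of_forall_notMem fun ω ↦ not_lt.2 <|
        le_klInvUp_of_klReal_le hq0 hq1 ⟨le_rfl, hq0.le⟩ h0 (havg ω) (havg ω).1
    simp [hempty]
  obtain ⟨t, ⟨ht0, htq⟩, hkl⟩ := intermediate_value_Icc' hq0.le
    (continuous_klReal q).continuousOn ⟨by rw [klReal_self]; exact hε.le, (not_le.1 h0).le⟩
  replace hkl : klReal t q = ε := hkl
  replace ht0 : 0 < t := ht0.lt_of_ne (by rintro rfl; exact h0 hkl.le)
  replace htq : t < q :=
    htq.lt_of_ne (by rintro rfl; exact hε.ne' (hkl.symm.trans (klReal_self t)))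
  calc P {ω | klInvUp ((Fintype.card ι : ℝ)⁻¹ * ∑ i, X i ω) ε < q}
      ≤ P {ω | ∑ i, X i ω ≤ Fintype.card ι * t} := by
        refine measure_mono fun ω (hω : _ < q) ↦ ?_
        show ∑ i, X i ω ≤ _
        by_contra! hsum
        exact not_le.2 hω (le_klInvUp_of_klReal_le hq0 hq1 ⟨ht0.le, htq.le⟩ hkl.le (havg ω)
          ((le_inv_mul_iff₀ (by positivity)).2 hsum.le))
    _ ≤ ENNReal.ofReal (Real.exp (-(Fintype.card ι * ε))) := by
        simpa [hkl] using measure_sum_le_le_exp_neg_klReal hmeas hrange hindep hmean ht0 htq hq1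

lemma measure_klInvUp_lt_le (hmeas : ∀ i, Measurable (X i))
    (hrange : ∀ i ω, X i ω ∈ Set.Icc (0 : ℝ) 1) (hindep : iIndepFun X P) {q ε : ℝ}
    (hmean : ∀ i, P[X i] = q) (hε : 0 < ε) :
    P {ω | klInvUp ((Fintype.card ι : ℝ)⁻¹ * ∑ i, X i ω) ε < q} ≤
      ENNReal.ofReal (Real.exp (-(Fintype.card ι * ε))) := by
  have havg ω := inv_card_mul_sum_mem_Icc fun i ↦ hrange i ω
  obtain ⟨i⟩ := ‹Nonempty ι›
  have hXint i : Integrable (X i) P :=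
    .of_mem_Icc 0 1 (hmeas i).aemeasurable (ae_of_all _ (hrange i))
  have hq0 : 0 ≤ q := hmean i ▸ integral_nonneg fun ω ↦ (hrange i ω).1
  have hq1 : q ≤ 1 := by
    simpa [hmean i] using integral_mono (hXint i) (integrable_const 1) fun ω ↦ (hrange i ω).2
  rcases hq0.eq_or_lt with rfl | hq0
  · have hempty : {ω | klInvUp ((Fintype.card ι : ℝ)⁻¹ * ∑ i, X i ω) ε < 0} = ∅ :=
      Set.eq_empty_of_forall_notMem fun ω ↦ not_lt.2 <|
        le_klInvUp_of_le (havg ω) (EReal.coe_nonneg.2 hε.le) (havg ω).1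
    simp [hempty]
  rcases hq1.eq_or_lt with rfl | hq1
  · have hone i : X i =ᵐ[P] 1 :=
      (integral_eq_iff_of_ae_le (hXint i) (integrable_const 1)
        (ae_of_all _ fun ω ↦ (hrange i ω).2)).1 (by simp [hmean i])
    refine (measure_eq_zero_iff_ae_notMem.2 ?_).trans_le zero_le
    filter_upwards [ae_all_iff.2 hone] with ω hω
    refine not_lt.2 (le_klInvUp_of_le (havg ω) (EReal.coe_nonneg.2 hε.le) ?_)
    simp [hω]
  exact measure_klInvUp_lt_le_of_mem_Ioo hmeas hrange hindep hmean hq0 hq1 hε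

lemma measure_lt_klInvLow_le (hmeas : ∀ i, Measurable (X i))
    (hrange : ∀ i ω, X i ω ∈ Set.Icc (0 : ℝ) 1) (hindep : iIndepFun X P) {q ε : ℝ}
    (hmean : ∀ i, P[X i] = q) (hε : 0 < ε) :
    P {ω | q < klInvLow ((Fintype.card ι : ℝ)⁻¹ * ∑ i, X i ω) ε} ≤
      ENNReal.ofReal (Real.exp (-(Fintype.card ι * ε))) := by
  have hXint i : Integrable (X i) P :=
    .of_mem_Icc 0 1 (hmeas i).aemeasurable (ae_of_all _ (hrange i))
  have hreflect := measure_klInvUp_lt_le (X := fun i ω ↦ 1 - X i ω) (q := 1 - q)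
    (fun i ↦ measurable_const.sub (hmeas i))
    (fun i ω ↦ ⟨sub_nonneg.2 (hrange i ω).2, sub_le_self _ (hrange i ω).1⟩)
    (hindep.comp (fun _ x ↦ 1 - x) fun _ ↦ measurable_const.sub measurable_id)
    (fun i ↦ by simp [integral_sub (integrable_const 1) (hXint i), hmean i]) hε
  convert hreflect using 3
  ext ω
  have hcard : (Fintype.card ι : ℝ) ≠ 0 := by positivity
  rw [klInvLow_eq_one_sub_klInvUp (inv_card_mul_sum_mem_Icc fun i ↦ hrange i ω)
    (EReal.coe_nonneg.2 hε.le), Finset.sum_sub_distrib, mul_sub, Finset.sum_const,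
    Finset.card_univ, nsmul_one, inv_mul_cancel₀ hcard]
  exact lt_sub_comm

end Probability

/-- Split-kl inequality: for i.i.d. random variables `Z n` with values in `[a, b]`,
`a < μ₀ < b`, with `Z n = μ₀ + Zₙ⁺ − Zₙ⁻` where `Zₙ⁺ = max 0 (Z n − μ₀)` and
`Zₙ⁻ = max 0 (μ₀ − Z n)`, mean `p = E[Z 0]` and empirical means `p̂⁺, p̂⁻`, for any
`δ ∈ (0,1)`, with probability at least `1 − δ`,
`p ≤ μ₀ + (b − μ₀)·kl⁻¹⁺(p̂⁺/(b − μ₀), ln(2/δ)/N) − (μ₀ − a)·kl⁻¹⁻(p̂⁻/(μ₀ − a), ln(2/δ)/N)`. -/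
theorem split_kl_inequality
    {Ω : Type*} [MeasurableSpace Ω] (P : Measure Ω) [IsProbabilityMeasure P]
    (a μ₀ b : ℝ) (haμ : a < μ₀) (hμb : μ₀ < b)
    (N : ℕ) (hN : 0 < N) (Z : Fin N → Ω → ℝ)
    (hmeas : ∀ n, Measurable (Z n))
    (hrange : ∀ n ω, Z n ω ∈ Set.Icc a b)
    (hindep : iIndepFun Z P)
    (hident : ∀ n, IdentDistrib (Z n) (Z ⟨0, hN⟩) P P)
    (δ : ℝ) (hδ : δ ∈ Set.Ioo (0 : ℝ) 1) :
    ENNReal.ofReal (1 - δ) ≤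
      P {ω | P[Z ⟨0, hN⟩] ≤ μ₀
          + (b - μ₀) * klInvUp (((N : ℝ)⁻¹ * ∑ n, max 0 (Z n ω - μ₀)) / (b - μ₀))
              ((Real.log (2 / δ) / (N : ℝ) : ℝ) : EReal)
          - (μ₀ - a) * klInvLow (((N : ℝ)⁻¹ * ∑ n, max 0 (μ₀ - Z n ω)) / (μ₀ - a))
              ((Real.log (2 / δ) / (N : ℝ) : ℝ) : EReal)} := by
  obtain ⟨hδ0, hδ1⟩ := hδ
  set ε := Real.log (2 / δ) / N
  have hε : 0 < ε := div_pos (Real.log_pos (by rw [lt_div_iff₀ hδ0]; linarith)) (by positivity)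
  have hexp : Real.exp (-(N * ε)) = δ / 2 := by
    rw [mul_div_cancel₀ _ (by positivity), Real.exp_neg, Real.exp_log (by positivity), inv_div]
  have : NeZero N := ⟨hN.ne'⟩
  set fp : ℝ → ℝ := fun x ↦ max 0 (x - μ₀) / (b - μ₀)
  set fm : ℝ → ℝ := fun x ↦ max 0 (μ₀ - x) / (μ₀ - a)
  have hfp : Measurable fp := by fun_prop
  have hfm : Measurable fm := by fun_prop
  have hfp01 n ω : fp (Z n ω) ∈ Set.Icc 0 1 :=
    max_zero_div_mem_Icc (by linarith) (by linarith [(hrange n ω).2])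
  have hfm01 n ω : fm (Z n ω) ∈ Set.Icc 0 1 :=
    max_zero_div_mem_Icc (by linarith) (by linarith [(hrange n ω).1])
  have hup := measure_klInvUp_lt_le (fun n ↦ hfp.comp (hmeas n)) hfp01
    (hindep.comp _ fun _ ↦ hfp) (fun n ↦ ((hident n).comp hfp).integral_eq) hε
  have hlow := measure_lt_klInvLow_le (fun n ↦ hfm.comp (hmeas n)) hfm01
    (hindep.comp _ fun _ ↦ hfm) (fun n ↦ ((hident n).comp hfm).integral_eq) hε
  simp only [Fintype.card_fin, hexp] at hup hlow
  have hmean : P[Z ⟨0, hN⟩] =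
      μ₀ + (b - μ₀) * P[fp ∘ Z ⟨0, hN⟩] - (μ₀ - a) * P[fm ∘ Z ⟨0, hN⟩] := by
    have hint : Integrable (Z ⟨0, hN⟩) P :=
      .of_mem_Icc a b (hmeas _).aemeasurable (ae_of_all _ (hrange _))
    simp only [Function.comp_def, fp, fm, integral_div]
    rw [mul_div_cancel₀ _ (by linarith), mul_div_cancel₀ _ (by linarith)]
    exact integral_eq_add_integral_max_sub_integral_max hint μ₀
  refine (le_of_eq (congrArg _ (by ring))).trans <|
    ofReal_one_sub_le_measure_of_compl_inter_subset (by positivity) (by positivity) hup hlow ?_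
  rintro ω ⟨hωp, hωm⟩
  simp only [Set.mem_compl_iff, Set.mem_ofPred_eq, not_lt] at hωp hωm
  show P[Z ⟨0, hN⟩] ≤ _
  rw [hmean]
  gcongr _ + _ * ?_ - _ * ?_
  · simpa [fp, Finset.sum_div, mul_div_assoc] using hωp
  · simpa [fm, Finset.sum_div, mul_div_assoc] using hωm
end

section
/- (Recursive PAC-Bayes bound.) Let (Ω, F, P) be a probability space (modelling the random data), let H be a measurable hypothesis space, let L : H → ℝ be a measurable bounded loss, and let T ≥ 1 and δ ∈ (0,1). For t = 1, …, T let κ_t : Ω → ℝ with κ_t ≥ 0 for t ≥ 2 (κ_1 arbitrary), let ρ*_t : Ω → (probability measures on H), let B_1 : (probability measures on H) × Ω → ℝ, and for t = 2, …, T let E_t : (probability measures on H) × Ω → ℝ. Assume: (i) P( there exists a probability measure ρ on H with E_ρ[L(h)] ≥ B_1(ρ) ) ≤ δ/T; and (ii) for each t = 2, …, T, P( there exists a probability measure ρ on H with E_ρ[L(h)] − κ_t·E_{ρ*_{t−1}}[L(h')] ≥ E_t(ρ) ) ≤ δ/T. Define recursively B_t(ρ) := E_t(ρ) + κ_t·B_{t−1}(ρ*_{t−1})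 for t = 2, …, T. Then P( there exist t ∈ {1, …, T} and a probability measure ρ on H with E_ρ[L(h)] ≥ B_t(ρ) ) ≤ δ. -/
open MeasureTheory ProbabilityTheory

/-- Recursive PAC-Bayes bound: if `B₁` is a PAC-Bayes bound on `E_ρ[L(h)]` holding except with
probability `δ/T`, and for each `t ∈ {2,…,T}` `E_t` is a PAC-Bayes bound on the excess loss
`E_ρ[L(h)] − κ_t·E_{ρ*_{t−1}}[L(h')]` holding except with probability `δ/T`, then the
recursively defined bounds `B_t(ρ) = E_t(ρ) + κ_t·B_{t−1}(ρ*_{t−1})` all hold simultaneously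
for all posteriors except with probability `δ`. -/
theorem recursive_pac_bayes_bound
    {Ω : Type*} [MeasurableSpace Ω] (P : Measure Ω) [IsProbabilityMeasure P]
    {H : Type*} [MeasurableSpace H]
    (L : H → ℝ) (hLmeas : Measurable L) (hLbdd : ∃ C : ℝ, ∀ h, |L h| ≤ C)
    (T : ℕ) (hT : 1 ≤ T) (δ : ℝ) (hδ : δ ∈ Set.Ioo (0 : ℝ) 1)
    (κ : ℕ → Ω → ℝ) (hκ : ∀ t, 2 ≤ t → ∀ ω, 0 ≤ κ t ω)
    (ρstar : ℕ → Ω → Measure H) (hρstar : ∀ t ω, IsProbabilityMeasure (ρstar t ω))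
    (B₁ : Measure H → Ω → ℝ) (Et : ℕ → Measure H → Ω → ℝ)
    -- the recursively defined bounds `B_t`
    (B : ℕ → Measure H → Ω → ℝ)
    (hBone : ∀ ρ ω, B 1 ρ ω = B₁ ρ ω)
    (hBrec : ∀ t, 2 ≤ t → t ≤ T → ∀ ρ ω,
      B t ρ ω = Et t ρ ω + κ t ω * B (t - 1) (ρstar (t - 1) ω) ω)
    -- hypothesis (i): `B₁` is a PAC-Bayes bound on the expected loss
    (hB₁ : P {ω | ∃ ρ : Measure H, IsProbabilityMeasure ρ ∧ B₁ ρ ω ≤ ∫ h, L h ∂ρ}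
      ≤ ENNReal.ofReal (δ / T))
    -- hypothesis (ii): each `E_t` is a PAC-Bayes bound on the excess loss
    (hEt : ∀ t, 2 ≤ t → t ≤ T →
      P {ω | ∃ ρ : Measure H, IsProbabilityMeasure ρ ∧
          Et t ρ ω ≤ (∫ h, L h ∂ρ) - κ t ω * ∫ h, L h ∂(ρstar (t - 1) ω)}
        ≤ ENNReal.ofReal (δ / T)) :
    P {ω | ∃ t, 1 ≤ t ∧ t ≤ T ∧ ∃ ρ : Measure H, IsProbabilityMeasure ρ ∧
        B t ρ ω ≤ ∫ h, L h ∂ρ} ≤ ENNReal.ofReal δ := by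
  classical
  set A : ℕ → Set Ω := fun t =>
    if t = 1 then {ω | ∃ ρ : Measure H, IsProbabilityMeasure ρ ∧ B₁ ρ ω ≤ ∫ h, L h ∂ρ}
    else {ω | ∃ ρ : Measure H, IsProbabilityMeasure ρ ∧
          Et t ρ ω ≤ (∫ h, L h ∂ρ) - κ t ω * ∫ h, L h ∂(ρstar (t - 1) ω)} with hA
  have hsub : {ω | ∃ t, 1 ≤ t ∧ t ≤ T ∧ ∃ ρ : Measure H, IsProbabilityMeasure ρ ∧
        B t ρ ω ≤ ∫ h, L h ∂ρ} ⊆ ⋃ t ∈ Finset.Icc 1 T, A t := by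
    intro ω hω
    by_contra hc
    simp only [Set.mem_iUnion, not_exists] at hc
    have hc' : ∀ t, 1 ≤ t → t ≤ T → ω ∉ A t := by
      intro t h1 h2 hmem
      exact hc t (Finset.mem_Icc.mpr ⟨h1, h2⟩) hmem
    have key : ∀ t, 1 ≤ t → t ≤ T → ∀ ρ : Measure H, IsProbabilityMeasure ρ →
        ∫ h, L h ∂ρ < B t ρ ω := by
      intro t
      induction t with
      | zero => intro h; omega
      | succ n ih =>
        intro h1 h2 ρ hρ
        rcases Nat.eq_zero_or_pos n with hn | hn
        · subst hn
          have := hc' 1 le_rfl h2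
          simp only [hA, if_pos rfl, Set.mem_setOf_eq, not_exists] at this
          have h3 := this ρ
          rw [hBone]
          by_contra hle
          exact h3 ⟨hρ, le_of_not_gt hle⟩
        · have ht2 : 2 ≤ n + 1 := by omega
          have := hc' (n + 1) h1 h2
          simp only [hA, if_neg (by omega : ¬ n + 1 = 1), Set.mem_setOf_eq, not_exists] at this
          have hEtlt : (∫ h, L h ∂ρ) - κ (n+1) ω * ∫ h, L h ∂(ρstar n ω)
              < Et (n+1) ρ ω := by
            by_contra hle
            exact this ρ ⟨hρ, by simpa using le_of_not_gt hle⟩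
          have hBn : ∫ h, L h ∂(ρstar n ω) < B n (ρstar n ω) ω :=
            ih hn (by omega) _ (hρstar n ω)
          have hκn : 0 ≤ κ (n+1) ω := hκ (n+1) ht2 ω
          have hrec := hBrec (n+1) ht2 h2 ρ ω
          simp only [Nat.add_sub_cancel] at hrec
          rw [hrec]
          have : κ (n+1) ω * ∫ h, L h ∂(ρstar n ω) ≤ κ (n+1) ω * B n (ρstar n ω) ω :=
            mul_le_mul_of_nonneg_left hBn.le hκn
          linarith
    obtain ⟨t, h1, h2, ρ, hρ, hle⟩ := hω
    exact absurd hle (not_le.mpr (key t h1 h2 ρ hρ))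
  calc P {ω | ∃ t, 1 ≤ t ∧ t ≤ T ∧ ∃ ρ : Measure H, IsProbabilityMeasure ρ ∧
        B t ρ ω ≤ ∫ h, L h ∂ρ}
      ≤ P (⋃ t ∈ Finset.Icc 1 T, A t) := measure_mono hsub
    _ ≤ ∑ t ∈ Finset.Icc 1 T, P (A t) := measure_biUnion_finset_le _ _
    _ ≤ ∑ _t ∈ Finset.Icc 1 T, ENNReal.ofReal (δ / T) := by
        refine Finset.sum_le_sum fun t ht => ?_
        rcases Finset.mem_Icc.mp ht with ⟨h1, h2⟩
        rcases eq_or_lt_of_le h1 with h | h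
        · simp only [hA, ← h, if_pos rfl]
          exact hB₁
        · simp only [hA, if_neg (by omega : ¬ t = 1)]
          exact hEt t (by omega) h2
    _ = (T : ENNReal) * ENNReal.ofReal (δ / T) := by
        rw [Finset.sum_const, Nat.card_Icc]
        simp [nsmul_eq_mul]
    _ = ENNReal.ofReal δ := by
        rw [← ENNReal.ofReal_natCast T, ← ENNReal.ofReal_mul (by positivity)]
        congr 1
        field_simp
end
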